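/- If the messages of a topological interference management problem can be partitioned into n subsets each of whose induced demand graphs is acyclic, and an orthogonal set of n messages exists (one per subset), then the optimal sum degrees of freedom equals exactly n. -/

import Mathlib

/-! The messages of each acyclic block carry at most one DoF, and DoF is subadditive over the
disjoint blocks, so the total is at most `n`; conversely the orthogonal set meets each block in
exactly one message, so it has `n` elements and achieves `n`. -/

/-- The demand graph induced by a subset `A` of the messages (with `src`,
`dst`, `heard` describing the network) has an alternating cycle: a closed
cyclic sequence of distinct sources and distinct destinations alternating
non-hearing edges with desired edges corresponding to messages of `A`. -/
def HasAltCycleOn {M S D : Type*} (src : M → S) (dst : M → D)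
    (heard : S → D → Prop) (A : Set M) : Prop :=
  ∃ (c : ℕ) (s : Fin (c + 1) → S) (d : Fin (c + 1) → D),
    Function.Injective s ∧ Function.Injective d ∧
    ∀ k, ¬ heard (s k) (d k) ∧ ∃ m ∈ A, src m = s k ∧ dst m = d (k + 1)

/-- A set of messages is orthogonal if the involved sources are distinct, the
involved destinations are distinct, and no involved destination hears any
involved source other than its own. -/
def IsOrthFam {M S D : Type*} (src : M → S) (dst : M → D)
    (heard : S → D → Prop) (A : Set M) : Prop :=
  ∀ m ∈ A, ∀ m' ∈ A, m ≠ m' → src m ≠ src m' ∧ dst m ≠ dst m' ∧ ¬ heard (src m') (dst m)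

open Function

lemma le_sum_biUnion_of_subadditive {α ι β : Type*} [AddCommMonoid β] [PartialOrder β]
    [IsOrderedAddMonoid β] (f : Set α → β)
    (hf : ∀ A B : Set α, Disjoint A B → f (A ∪ B) ≤ f A + f B)
    {P : ι → Set α} (hP : Pairwise (Disjoint on P)) {s : Finset ι} (hs : s.Nonempty) :
    f (⋃ i ∈ s, P i) ≤ ∑ i ∈ s, f (P i) := by
  induction hs using Finset.Nonempty.cons_induction with
  | singleton a => simp
  | cons a s ha _ ih =>
    classical
    have hdisj : Disjoint (P a) (⋃ i ∈ s, P i) :=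
      Set.disjoint_iUnion₂_right.mpr fun i hi => hP (ne_of_mem_of_not_mem hi ha).symm
    rw [Finset.sum_cons, Finset.cons_eq_insert, Finset.set_biUnion_insert]
    exact (hf _ _ hdisj).trans (add_le_add_right ih _)

lemma pairwise_disjoint_of_existsUnique_mem {α ι : Type*} {P : ι → Set α}
    (hP : ∀ a, ∃! i, a ∈ P i) : Pairwise (Disjoint on P) :=
  fun _ _ hij => Set.disjoint_left.mpr fun a hai haj => hij ((hP a).unique hai haj)

lemma ncard_eq_of_existsUnique_mem_inter {α ι : Type*} {P : ι → Set α}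
    (hP : ∀ a, ∃! i, a ∈ P i) {O : Set α} (hO : ∀ i, ∃! a, a ∈ O ∩ P i) :
    O.ncard = Nat.card ι := by
  choose g hg hg_unique using hO
  have hg_inj : Injective g := fun i j hij =>
    (hP (g i)).unique (hg i).2 (hij ▸ (hg j).2)
  have hO_range : O = Set.range g := by
    ext a
    refine ⟨fun ha => ?_, fun ⟨i, hi⟩ => hi ▸ (hg i).1⟩
    obtain ⟨i, hi, -⟩ := hP a
    exact ⟨i, (hg_unique i a ⟨ha, hi⟩).symm⟩
  rw [hO_range, Set.ncard_range_of_injective hg_inj]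

/-- Consider a TIM problem with message set `M` and optimal sum-DoF function
`DoF` on message subsets, satisfying: the acyclic demand set bound (subsets
with acyclic demand graph have sum-DoF at most 1), subadditivity over disjoint
subsets, and achievability of any orthogonal set's cardinality.  If the
messages partition into `n` subsets each inducing an acyclic demand graph, and
there is an orthogonal set of `n` messages, one per subset, then the optimal
sum-DoF equals exactly `n`. -/
theorem stmt9 {M S D : Type*} (src : M → S) (dst : M → D) (heard : S → D → Prop)
    (DoF : Set M → ℝ)
    (hacyc_bound : ∀ A : Set M, ¬ HasAltCycleOn src dst heard A → DoF A ≤ 1)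
    (hsub : ∀ A B : Set M, Disjoint A B → DoF (A ∪ B) ≤ DoF A + DoF B)
    (hach : ∀ A : Set M, IsOrthFam src dst heard A → (A.ncard : ℝ) ≤ DoF Set.univ)
    (n : ℕ) (hn : 0 < n) (P : Fin n → Set M)
    (hcover : ∀ m : M, ∃! k : Fin n, m ∈ P k)
    (hacyc : ∀ k : Fin n, ¬ HasAltCycleOn src dst heard (P k))
    (O : Set M) (hO : IsOrthFam src dst heard O)
    (hOper : ∀ k : Fin n, ∃! m : M, m ∈ O ∩ P k) :
    DoF Set.univ = n := by
  have hunion : (⋃ k ∈ Finset.univ, P k) = Set.univ := Set.eq_univ_of_forall fun m =>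
    let ⟨k, hk, _⟩ := hcover m
    Set.mem_biUnion (Finset.mem_univ k) hk
  have hne : (Finset.univ : Finset (Fin n)).Nonempty := Finset.univ_nonempty_iff.mpr ⟨⟨0, hn⟩⟩
  have hupper : DoF Set.univ ≤ n := calc
    DoF Set.univ ≤ ∑ k, DoF (P k) := hunion ▸ le_sum_biUnion_of_subadditive DoF hsub
        (pairwise_disjoint_of_existsUnique_mem hcover) hne
    _ ≤ ∑ _k : Fin n, (1 : ℝ) := Finset.sum_le_sum fun k _ => hacyc_bound _ (hacyc k)
    _ = n := by simp
  have hlower : (n : ℝ) ≤ DoF Set.univ := by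
    simpa [ncard_eq_of_existsUnique_mem_inter hcover hOper] using hach O hO
  exact le_antisymm hupper hlower
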